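/- arXiv:2303.13319 — 6 statements merged into one kernel-verified Lean document; each statement's English description precedes it below -/
import Mathlib

section
/- The elasticity of labor demand L^d(θ) = ((1-α)a / ((1+τ(θ))^{1-α} w))^{1/α} with respect to tightness equals -((1-α)/α)·η·τ(θ), which is strictly negative for θ ∈ (0, θ_τ). -/
/-- The elasticity of labor demand `L^d(θ) = ((1-α)a/((1+τ(θ))^(1-α) w))^(1/α)`
with respect to tightness equals `-((1-α)/α)·η·τ(θ)`, strictly negative on
`(0, θ_τ)`; here `τ(θ) = λκ/(μθ^(-η)-λκ)` and `q(θ_τ) = λκ`. -/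
theorem stmt_8 (μ η lam κ a w α : ℝ) (hμ : 0 < μ) (hη0 : 0 < η) (hη1 : η < 1)
    (hlam : 0 < lam) (hκ : 0 < κ) (hlk : lam * κ < μ) (ha : 0 < a) (hw : 0 < w)
    (hα0 : 0 < α) (hα1 : α < 1)
    (θτ : ℝ) (hθτ : θτ = (μ / (lam * κ)) ^ (1 / η))
    (θ : ℝ) (hθ : θ ∈ Set.Ioo 0 θτ) :
    θ * deriv (fun x : ℝ =>
        ((1 - α) * a / ((1 + lam * κ / (μ * x ^ (-η) - lam * κ)) ^ (1 - α) * w)) ^ (1 / α)) θ /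
      (((1 - α) * a / ((1 + lam * κ / (μ * θ ^ (-η) - lam * κ)) ^ (1 - α) * w)) ^ (1 / α))
      = -((1 - α) / α) * η * (lam * κ / (μ * θ ^ (-η) - lam * κ)) ∧
    -((1 - α) / α) * η * (lam * κ / (μ * θ ^ (-η) - lam * κ)) < 0 := by
  obtain ⟨hθ0, hθlt⟩ := hθ
  have hη : η ≠ 0 := ne_of_gt hη0
  have hlk0 : 0 < lam * κ := mul_pos hlam hκ
  have hA : (0:ℝ) < θ ^ (-η) := Real.rpow_pos_of_pos hθ0 _
  -- θ^η < μ/(lam κ)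
  have hθη : θ ^ η < μ / (lam * κ) := by
    have h1 : θ ^ η < θτ ^ η := Real.rpow_lt_rpow hθ0.le hθlt hη0
    have h2 : θτ ^ η = μ / (lam * κ) := by
      rw [hθτ, ← Real.rpow_mul (by positivity), one_div_mul_cancel hη, Real.rpow_one]
    rwa [h2] at h1
  have hG : 0 < μ * θ ^ (-η) - lam * κ := by
    have hpow : (0:ℝ) < θ ^ η := Real.rpow_pos_of_pos hθ0 _
    have : lam * κ < μ * θ ^ (-η) := by
      rw [Real.rpow_neg hθ0.le, ← div_eq_mul_inv, lt_div_iff₀ hpow]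
      calc lam * κ * θ ^ η < lam * κ * (μ / (lam * κ)) := by
            exact mul_lt_mul_of_pos_left hθη hlk0
        _ = μ := by field_simp
    linarith
  set G : ℝ := μ * θ ^ (-η) - lam * κ with hGdef
  have hτpos : 0 < lam * κ / G := div_pos hlk0 hG
  have hU : 0 < 1 + lam * κ / G := by linarith
  have hV : 0 < (1 + lam * κ / G) ^ (1 - α) := Real.rpow_pos_of_pos hU _
  have hC : 0 < (1 - α) * a := mul_pos (by linarith) ha
  have hF0 : 0 < (1 - α) * a / ((1 + lam * κ / G) ^ (1 - α) * w) :=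
    div_pos hC (mul_pos hV hw)
  -- derivative chain
  have hdA : HasDerivAt (fun x : ℝ => x ^ (-η)) (-η * θ ^ (-η - 1)) θ :=
    Real.hasDerivAt_rpow_const (Or.inl (ne_of_gt hθ0))
  have hdG : HasDerivAt (fun x : ℝ => μ * x ^ (-η) - lam * κ)
      (μ * (-η * θ ^ (-η - 1))) θ := (hdA.const_mul μ).sub_const _
  have hdτ : HasDerivAt (fun x : ℝ => lam * κ / (μ * x ^ (-η) - lam * κ))
      ((0 * G - lam * κ * (μ * (-η * θ ^ (-η - 1)))) / G ^ 2) θ :=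
    (hasDerivAt_const θ (lam * κ)).div hdG (ne_of_gt hG)
  have hdU : HasDerivAt (fun x : ℝ => 1 + lam * κ / (μ * x ^ (-η) - lam * κ))
      ((0 * G - lam * κ * (μ * (-η * θ ^ (-η - 1)))) / G ^ 2) θ := hdτ.const_add 1
  have hdV : HasDerivAt (fun x : ℝ => (1 + lam * κ / (μ * x ^ (-η) - lam * κ)) ^ (1 - α))
      ((0 * G - lam * κ * (μ * (-η * θ ^ (-η - 1)))) / G ^ 2 * (1 - α)
        * (1 + lam * κ / G) ^ (1 - α - 1)) θ :=
    hdU.rpow_const (Or.inl (ne_of_gt hU))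
  have hdD : HasDerivAt
      (fun x : ℝ => (1 + lam * κ / (μ * x ^ (-η) - lam * κ)) ^ (1 - α) * w)
      ((0 * G - lam * κ * (μ * (-η * θ ^ (-η - 1)))) / G ^ 2 * (1 - α)
        * (1 + lam * κ / G) ^ (1 - α - 1) * w) θ := hdV.mul_const w
  have hdF0 : HasDerivAt
      (fun x : ℝ => (1 - α) * a / ((1 + lam * κ / (μ * x ^ (-η) - lam * κ)) ^ (1 - α) * w))
      ((0 * ((1 + lam * κ / G) ^ (1 - α) * w) - (1 - α) * a *
        ((0 * G - lam * κ * (μ * (-η * θ ^ (-η - 1)))) / G ^ 2 * (1 - α)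
          * (1 + lam * κ / G) ^ (1 - α - 1) * w)) / ((1 + lam * κ / G) ^ (1 - α) * w) ^ 2) θ :=
    (hasDerivAt_const θ ((1 - α) * a)).div hdD (by positivity)
  have hdL : HasDerivAt
      (fun x : ℝ => ((1 - α) * a /
        ((1 + lam * κ / (μ * x ^ (-η) - lam * κ)) ^ (1 - α) * w)) ^ (1 / α))
      ((0 * ((1 + lam * κ / G) ^ (1 - α) * w) - (1 - α) * a *
        ((0 * G - lam * κ * (μ * (-η * θ ^ (-η - 1)))) / G ^ 2 * (1 - α)
          * (1 + lam * κ / G) ^ (1 - α - 1) * w)) / ((1 + lam * κ / G) ^ (1 - α) * w) ^ 2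
        * (1 / α) *
        ((1 - α) * a / ((1 + lam * κ / G) ^ (1 - α) * w)) ^ (1 / α - 1)) θ :=
    hdF0.rpow_const (Or.inl (ne_of_gt hF0))
  constructor
  · rw [hdL.deriv]
    have e1 : θ ^ (-η - 1) = θ ^ (-η) / θ := by
      rw [← Real.rpow_sub_one (ne_of_gt hθ0)]
    have e2 : (1 + lam * κ / G) ^ (1 - α - 1) = (1 + lam * κ / G) ^ (1 - α) / (1 + lam * κ / G) := by
      rw [← Real.rpow_sub_one (ne_of_gt hU)]
    have e3 : ((1 - α) * a / ((1 + lam * κ / G) ^ (1 - α) * w)) ^ (1 / α - 1)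
        = ((1 - α) * a / ((1 + lam * κ / G) ^ (1 - α) * w)) ^ (1 / α)
          / ((1 - α) * a / ((1 + lam * κ / G) ^ (1 - α) * w)) := by
      rw [← Real.rpow_sub_one (ne_of_gt hF0)]
    rw [e1, e2, e3]
    have hUeq : 1 + lam * κ / G = μ * θ ^ (-η) / G := by
      field_simp [hGdef]
      linarith
    have hP : 0 < ((1 - α) * a / ((1 + lam * κ / G) ^ (1 - α) * w)) ^ (1 / α) :=
      Real.rpow_pos_of_pos hF0 _
    rw [hUeq] at *
    field_simp [(sub_pos.mpr hα1).ne']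
    ring
  · have h : 0 < (1 - α) / α * η * (lam * κ / G) :=
      mul_pos (mul_pos (div_pos (by linarith) hα0) hη0) (div_pos hlk0 hG)
    linarith
end

section
/- There exists a unique θ ∈ (0, θ_τ) such that L^s(θ,H) = L^d(θ,a): since L^s is continuous and strictly increasing in θ with L^s(0)=0, and L^d is continuous and strictly decreasing in θ with L^d(θ) → 0 as θ → θ_τ and L^d bounded away from 0 near θ = 0, the supply-equals-demand equation has exactly one solution. -/
open Real Set


/-- There exists a unique `θ ∈ (0, θ_τ)` at which labor supply equals labor
demand: `f(θ)H/(λ+f(θ)) = ((1-α)a/((1+τ(θ))^(1-α) w))^(1/α)`, with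
`f(θ) = μθ^(1-η)`, `τ(θ) = λκ/(μθ^(-η)-λκ)`, and `q(θ_τ) = λκ`. -/
theorem stmt_9 (μ η lam κ a w α H : ℝ) (hμ : 0 < μ) (hη0 : 0 < η) (hη1 : η < 1)
    (hlam : 0 < lam) (hκ : 0 < κ) (hlk : lam * κ < μ) (ha : 0 < a) (hw : 0 < w)
    (hα0 : 0 < α) (hα1 : α < 1) (hH : 0 < H)
    (θτ : ℝ) (hθτ : θτ = (μ / (lam * κ)) ^ (1 / η)) :
    ∃! θ : ℝ, θ ∈ Set.Ioo 0 θτ ∧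
      μ * θ ^ (1 - η) * H / (lam + μ * θ ^ (1 - η)) =
      ((1 - α) * a / ((1 + lam * κ / (μ * θ ^ (-η) - lam * κ)) ^ (1 - α) * w)) ^ (1 / α) := by
  have hlk0 : 0 < lam * κ := mul_pos hlam hκ
  have h1α : 0 < 1 - α := by linarith
  have h1η : 0 < 1 - η := by linarith
  have hθτ0 : 0 < θτ := by
    rw [hθτ]; exact Real.rpow_pos_of_pos (by positivity) _
  have hτη : θτ ^ η = μ / (lam * κ) := by
    rw [hθτ, ← Real.rpow_mul (by positivity), one_div, inv_mul_cancel₀ hη0.ne',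
      Real.rpow_one]
  set S : ℝ → ℝ := fun θ => μ * θ ^ (1 - η) * H / (lam + μ * θ ^ (1 - η)) with hSdef
  set D : ℝ → ℝ := fun θ =>
    ((1 - α) * a * (μ - lam * κ * θ ^ η) ^ (1 - α) / (μ ^ (1 - α) * w)) ^ (1 / α) with hDdef
  set F : ℝ → ℝ := fun θ => S θ - D θ with hFdef
  -- rewriting of the demand side for θ ∈ Ioo 0 θτ
  have hkey : ∀ θ ∈ Ioo (0:ℝ) θτ,
      ((1 - α) * a / ((1 + lam * κ / (μ * θ ^ (-η) - lam * κ)) ^ (1 - α) * w)) ^ (1 / α)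
        = D θ := by
    rintro θ ⟨hθ0, hθlt⟩
    have ht0 : 0 < θ ^ η := Real.rpow_pos_of_pos hθ0 _
    have htlt : θ ^ η < μ / (lam * κ) := by
      rw [← hτη]; exact Real.rpow_lt_rpow hθ0.le hθlt hη0
    have hden : 0 < μ - lam * κ * θ ^ η := by
      have h := mul_lt_mul_of_pos_left htlt hlk0
      rw [mul_div_cancel₀ _ hlk0.ne'] at h
      linarith
    have hneg : θ ^ (-η) = (θ ^ η)⁻¹ := Real.rpow_neg hθ0.le η
    have h1 : 1 + lam * κ / (μ * θ ^ (-η) - lam * κ) = μ / (μ - lam * κ * θ ^ η) := by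
      rw [hneg]
      rw [show μ * (θ ^ η)⁻¹ - lam * κ = (μ - lam * κ * θ ^ η) / θ ^ η by field_simp]
      rw [div_div_eq_mul_div]
      field_simp
      ring
    simp only [hDdef]
    rw [h1, Real.div_rpow hμ.le hden.le]
    congr 1
    have hp1 : (0:ℝ) < μ ^ (1 - α) := Real.rpow_pos_of_pos hμ _
    have hp2 : (0:ℝ) < (μ - lam * κ * θ ^ η) ^ (1 - α) := Real.rpow_pos_of_pos hden _
    field_simp
  -- strict monotonicity pieces on Icc 0 θτ
  have hSmono : ∀ x ∈ Icc (0:ℝ) θτ, ∀ y ∈ Icc (0:ℝ) θτ, x < y → S x < S y := by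
    rintro x ⟨hx0, -⟩ y ⟨hy0, -⟩ hxy
    have hru : x ^ (1 - η) < y ^ (1 - η) := Real.rpow_lt_rpow hx0 hxy h1η
    have hu0 : 0 ≤ x ^ (1 - η) := Real.rpow_nonneg hx0 _
    simp only [hSdef]
    rw [div_lt_div_iff₀ (by positivity) (by positivity)]
    nlinarith [mul_pos hlam hH, mul_pos hμ (mul_pos hlam hH)]
  have hDanti : ∀ x ∈ Icc (0:ℝ) θτ, ∀ y ∈ Icc (0:ℝ) θτ, x < y → D y < D x := by
    rintro x ⟨hx0, -⟩ y ⟨-, hyτ⟩ hxy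
    have hy0 : 0 ≤ y := le_trans hx0 hxy.le
    have hyη : y ^ η ≤ μ / (lam * κ) := by
      rw [← hτη]; exact Real.rpow_le_rpow hy0 hyτ hη0.le
    have hyden : 0 ≤ μ - lam * κ * y ^ η := by
      have h := mul_le_mul_of_nonneg_left hyη hlk0.le
      rw [mul_div_cancel₀ _ hlk0.ne'] at h
      linarith
    have hxyη : x ^ η < y ^ η := Real.rpow_lt_rpow hx0 hxy hη0
    have hinner : μ - lam * κ * y ^ η < μ - lam * κ * x ^ η := by
      nlinarith
    have hr : (μ - lam * κ * y ^ η) ^ (1 - α) < (μ - lam * κ * x ^ η) ^ (1 - α) :=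
      Real.rpow_lt_rpow hyden hinner h1α
    have hbase : (1 - α) * a * (μ - lam * κ * y ^ η) ^ (1 - α) / (μ ^ (1 - α) * w)
        < (1 - α) * a * (μ - lam * κ * x ^ η) ^ (1 - α) / (μ ^ (1 - α) * w) := by
      have hdpos : (0:ℝ) < μ ^ (1 - α) * w := by
        have := Real.rpow_pos_of_pos hμ (1 - α); positivity
      apply div_lt_div_of_pos_right ?_ hdpos
      exact mul_lt_mul_of_pos_left hr (by positivity)
    have hb0 : 0 ≤ (1 - α) * a * (μ - lam * κ * y ^ η) ^ (1 - α) / (μ ^ (1 - α) * w) := by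
      have h1 : 0 ≤ (μ - lam * κ * y ^ η) ^ (1 - α) := Real.rpow_nonneg hyden _
      have h2 : (0:ℝ) < μ ^ (1 - α) := Real.rpow_pos_of_pos hμ _
      positivity
    simp only [hDdef]
    exact Real.rpow_lt_rpow hb0 hbase (by positivity)
  have hFmono : StrictMonoOn F (Icc (0:ℝ) θτ) := by
    intro x hx y hy hxy
    have := hSmono x hx y hy hxy
    have := hDanti x hx y hy hxy
    simp only [hFdef]
    linarith
  -- continuity of F on Icc 0 θτ
  have hcont : ContinuousOn F (Icc (0:ℝ) θτ) := by
    have hpow1 : ContinuousOn (fun θ : ℝ => θ ^ (1 - η)) (Icc (0:ℝ) θτ) :=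
      ContinuousOn.rpow_const continuousOn_id (fun x _ => Or.inr h1η.le)
    have hSc : ContinuousOn S (Icc (0:ℝ) θτ) := by
      apply ContinuousOn.div
      · exact ((continuousOn_const.mul hpow1).mul continuousOn_const)
      · exact continuousOn_const.add (continuousOn_const.mul hpow1)
      · rintro x ⟨hx0, -⟩
        have : 0 ≤ x ^ (1 - η) := Real.rpow_nonneg hx0 _
        positivity
    have hpow2 : ContinuousOn (fun θ : ℝ => θ ^ η) (Icc (0:ℝ) θτ) :=
      ContinuousOn.rpow_const continuousOn_id (fun x _ => Or.inr hη0.le)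
    have hDc : ContinuousOn D (Icc (0:ℝ) θτ) := by
      apply ContinuousOn.rpow_const
      · apply ContinuousOn.div_const
        apply ContinuousOn.mul continuousOn_const
        exact ContinuousOn.rpow_const
          (continuousOn_const.sub (continuousOn_const.mul hpow2))
          (fun x _ => Or.inr h1α.le)
      · intro x _; exact Or.inr (by positivity)
    exact hSc.sub hDc
  -- values at the endpoints
  have hF0 : F 0 < 0 := by
    have hz : (0:ℝ) ^ (1 - η) = 0 := Real.zero_rpow h1η.ne'
    have hzη : (0:ℝ) ^ η = 0 := Real.zero_rpow hη0.ne'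
    have hS0 : S 0 = 0 := by simp [hSdef, hz]
    have hD0 : 0 < D 0 := by
      simp only [hDdef, hzη, mul_zero, sub_zero]
      apply Real.rpow_pos_of_pos
      have h2 : (0:ℝ) < μ ^ (1 - α) := Real.rpow_pos_of_pos hμ _
      positivity
    simp only [hFdef]
    linarith
  have hFτ : 0 < F θτ := by
    have hzero : μ - lam * κ * θτ ^ η = 0 := by
      rw [hτη, mul_div_cancel₀ _ hlk0.ne', sub_self]
    have hDτ : D θτ = 0 := by
      simp only [hDdef, hzero]
      rw [Real.zero_rpow h1α.ne', mul_zero, zero_div,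
        Real.zero_rpow (by positivity : (1:ℝ)/α ≠ 0)]
    have hSτ : 0 < S θτ := by
      have : 0 < θτ ^ (1 - η) := Real.rpow_pos_of_pos hθτ0 _
      simp only [hSdef]
      positivity
    simp only [hFdef]
    linarith
  -- intermediate value theorem
  obtain ⟨c, hcIcc, hFc⟩ :=
    intermediate_value_Icc hθτ0.le hcont ⟨hF0.le, hFτ.le⟩
  have hcIoo : c ∈ Ioo (0:ℝ) θτ := by
    rcases hcIcc with ⟨hc0, hcτ⟩
    constructor
    · rcases lt_or_eq_of_le hc0 with h | h
      · exact h
      · exfalso; rw [← h] at hFc; linarith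
    · rcases lt_or_eq_of_le hcτ with h | h
      · exact h
      · exfalso; rw [h] at hFc; linarith
  refine ⟨c, ⟨hcIoo, ?_⟩, ?_⟩
  · rw [hkey c hcIoo]
    have : S c = D c := by simp only [hFdef] at hFc; linarith
    exact this
  · rintro θ' ⟨hθ'Ioo, heq'⟩
    rw [hkey θ' hθ'Ioo] at heq'
    have hFθ' : F θ' = 0 := by
      simp only [hFdef]
      have h : S θ' = D θ' := heq'
      linarith
    have hmem1 : θ' ∈ Icc (0:ℝ) θτ := Ioo_subset_Icc_self hθ'Ioo
    have hmem2 : c ∈ Icc (0:ℝ) θτ := hcIcc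
    exact hFmono.injOn hmem1 hmem2 (by rw [hFθ', hFc])
end

section
/- The elasticity of the employment rate with respect to the labor force, ε^l_H(θ) = -(1-β/α) / (1 + ((1-α)/α)·(η/(1-η))·(τ(θ)/u(θ))), is strictly negative and strictly increasing in θ on (0, θ_τ); moreover ε^l_H(θ) → -(1-β/α) as θ → 0 and ε^l_H(θ) → 0 as θ → θ_τ. -/
open Filter Set Real Topology

/-- The elasticity of the employment rate with respect to the labor force,
`ε^l_H(θ) = -(1-β/α)/(1 + ((1-α)/α)·(η/(1-η))·(τ(θ)/u(θ)))`, with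
`τ(θ) = λκ/(μθ^(-η)-λκ)` and `u(θ) = λ/(λ+μθ^(1-η))`, is strictly negative and
strictly increasing on `(0, θ_τ)`; moreover it tends to `-(1-β/α)` as `θ → 0⁺`
and to `0` as `θ → θ_τ⁻`. -/
theorem stmt_13 (μ η lam κ α β : ℝ) (hμ : 0 < μ) (hη0 : 0 < η) (hη1 : η < 1)
    (hlam : 0 < lam) (hκ : 0 < κ) (hlk : lam * κ < μ)
    (hα0 : 0 < α) (hα1 : α < 1) (hβ0 : 0 ≤ β) (hβα : β < α)
    (θτ : ℝ) (hθτ : θτ = (μ / (lam * κ)) ^ (1 / η))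
    (elH : ℝ → ℝ)
    (helH : ∀ θ, elH θ = -(1 - β / α) /
      (1 + (1 - α) / α * (η / (1 - η)) *
        ((lam * κ / (μ * θ ^ (-η) - lam * κ)) / (lam / (lam + μ * θ ^ (1 - η)))))) :
    (∀ θ ∈ Set.Ioo 0 θτ, elH θ < 0) ∧
    StrictMonoOn elH (Set.Ioo 0 θτ) ∧
    Filter.Tendsto elH (nhdsWithin 0 (Set.Ioi 0)) (nhds (-(1 - β / α))) ∧
    Filter.Tendsto elH (nhdsWithin θτ (Set.Iio θτ)) (nhds 0) := by
  have hK : 0 < 1 - β / α := by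
    have : β / α < 1 := (div_lt_one hα0).mpr hβα
    linarith
  have hc : 0 < (1 - α) / α * (η / (1 - η)) :=
    mul_pos (div_pos (by linarith) hα0) (div_pos hη0 (by linarith))
  set c : ℝ := (1 - α) / α * (η / (1 - η)) with hcdef
  have hlk0 : 0 < lam * κ := mul_pos hlam hκ
  have hratio : 0 < μ / (lam * κ) := div_pos hμ hlk0
  have hθτ_pos : 0 < θτ := hθτ ▸ Real.rpow_pos_of_pos hratio _
  have hθτη : θτ ^ η = μ / (lam * κ) := by
    rw [hθτ, ← Real.rpow_mul hratio.le, one_div_mul_cancel hη0.ne', Real.rpow_one]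
  -- positivity of the A-denominator on the interval
  have hA : ∀ θ ∈ Ioo (0:ℝ) θτ, 0 < μ * θ ^ (-η) - lam * κ := by
    intro θ hθ
    have h1 : θ ^ η < μ / (lam * κ) := by
      rw [← hθτη]; exact Real.rpow_lt_rpow hθ.1.le hθ.2 hη0
    have hθη : 0 < θ ^ η := Real.rpow_pos_of_pos hθ.1 _
    have h2 : lam * κ * θ ^ η < μ := by
      have := (lt_div_iff₀ hlk0).mp h1
      linarith
    have h3 : lam * κ < μ / θ ^ η := (lt_div_iff₀ hθη).mpr (by linarith)
    rw [Real.rpow_neg hθ.1.le]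
    rw [← div_eq_mul_inv]
    linarith
  have hB : ∀ θ : ℝ, 0 ≤ θ → 0 < lam + μ * θ ^ (1 - η) := by
    intro θ hθ
    have : 0 ≤ θ ^ (1 - η) := Real.rpow_nonneg hθ _
    nlinarith
  -- G positive on the interval
  set G : ℝ → ℝ := fun θ =>
    (lam * κ / (μ * θ ^ (-η) - lam * κ)) / (lam / (lam + μ * θ ^ (1 - η))) with hGdef
  have hG : ∀ θ ∈ Ioo (0:ℝ) θτ, 0 < G θ := by
    intro θ hθ
    exact div_pos (div_pos hlk0 (hA θ hθ)) (div_pos hlam (hB θ hθ.1.le))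
  have hD : ∀ θ ∈ Ioo (0:ℝ) θτ, 0 < 1 + c * G θ := by
    intro θ hθ
    have := mul_pos hc (hG θ hθ)
    linarith
  have helH' : ∀ θ, elH θ = -(1 - β / α) / (1 + c * G θ) := helH
  -- negativity
  have hneg : ∀ θ ∈ Ioo (0:ℝ) θτ, elH θ < 0 := by
    intro θ hθ
    rw [helH' θ]
    exact div_neg_of_neg_of_pos (by linarith) (hD θ hθ)
  -- strict monotonicity of G
  have hGmono : ∀ x ∈ Ioo (0:ℝ) θτ, ∀ y ∈ Ioo (0:ℝ) θτ, x < y → G x < G y := by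
    intro x hx y hy hxy
    have hAx := hA x hx
    have hAy := hA y hy
    have hAyx : μ * y ^ (-η) - lam * κ < μ * x ^ (-η) - lam * κ := by
      have h1 : x ^ η < y ^ η := Real.rpow_lt_rpow hx.1.le hxy hη0
      have h2 : (y ^ η)⁻¹ < (x ^ η)⁻¹ :=
        inv_strictAnti₀ (Real.rpow_pos_of_pos hx.1 _) h1
      rw [Real.rpow_neg hx.1.le, Real.rpow_neg hy.1.le]
      have := mul_lt_mul_of_pos_left h2 hμ
      linarith
    have hT : lam * κ / (μ * x ^ (-η) - lam * κ) < lam * κ / (μ * y ^ (-η) - lam * κ) :=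
      div_lt_div_of_pos_left hlk0 hAy hAyx
    have hBx := hB x hx.1.le
    have hBy := hB y hy.1.le
    have hBxy : lam + μ * x ^ (1 - η) < lam + μ * y ^ (1 - η) := by
      have h1 : x ^ (1-η) < y ^ (1-η) := Real.rpow_lt_rpow hx.1.le hxy (by linarith)
      nlinarith
    have hU : lam / (lam + μ * y ^ (1 - η)) < lam / (lam + μ * x ^ (1 - η)) :=
      div_lt_div_of_pos_left hlam hBx hBxy
    have hUy : 0 < lam / (lam + μ * y ^ (1 - η)) := div_pos hlam hBy
    have hUx : 0 < lam / (lam + μ * x ^ (1 - η)) := div_pos hlam hBx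
    have hTx : 0 < lam * κ / (μ * x ^ (-η) - lam * κ) := div_pos hlk0 hAx
    have hTy : 0 < lam * κ / (μ * y ^ (-η) - lam * κ) := div_pos hlk0 hAy
    calc G x < lam * κ / (μ * y ^ (-η) - lam * κ) / (lam / (lam + μ * x ^ (1 - η))) := by
              exact div_lt_div_of_pos_right hT hUx
      _ < G y := div_lt_div_of_pos_left hTy hUy hU
  have hmono : StrictMonoOn elH (Ioo (0:ℝ) θτ) := by
    intro x hx y hy hxy
    rw [helH' x, helH' y]
    have hDx := hD x hx
    have hDy := hD y hy
    have hDxy : 1 + c * G x < 1 + c * G y := by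
      have := mul_lt_mul_of_pos_left (hGmono x hx y hy hxy) hc
      linarith
    have : (1 - β / α) / (1 + c * G y) < (1 - β / α) / (1 + c * G x) :=
      div_lt_div_of_pos_left hK hDx hDxy
    rw [neg_div, neg_div]
    linarith
  refine ⟨hneg, hmono, ?_, ?_⟩
  · -- limit at 0
    have hpow1 : Tendsto (fun θ : ℝ => θ ^ η) (𝓝[>] 0) (𝓝[>] 0) := by
      rw [tendsto_nhdsWithin_iff]
      constructor
      · have hcont : ContinuousAt (fun θ : ℝ => θ ^ η) 0 :=
          Real.continuousAt_rpow_const 0 η (Or.inr hη0.le)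
        have := hcont.tendsto.mono_left (nhdsWithin_le_nhds (s := Set.Ioi (0:ℝ)))
        rwa [Real.zero_rpow hη0.ne'] at this
      · filter_upwards [self_mem_nhdsWithin] with θ (hθ : 0 < θ)
        exact Real.rpow_pos_of_pos hθ _
    have hAtop : Tendsto (fun θ : ℝ => μ * θ ^ (-η) - lam * κ) (𝓝[>] 0) atTop := by
      have h1 : Tendsto (fun θ : ℝ => (θ ^ η)⁻¹) (𝓝[>] 0) atTop :=
        tendsto_inv_nhdsGT_zero.comp hpow1
      have h2 : Tendsto (fun θ : ℝ => μ * (θ ^ η)⁻¹) (𝓝[>] 0) atTop :=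
        h1.const_mul_atTop hμ
      have h3 := tendsto_atTop_add_const_right (𝓝[>] (0:ℝ)) (-(lam * κ)) h2
      refine h3.congr' ?_
      filter_upwards [self_mem_nhdsWithin] with θ (hθ : 0 < θ)
      rw [Real.rpow_neg hθ.le]; ring
    have hTlim : Tendsto (fun θ : ℝ => lam * κ / (μ * θ ^ (-η) - lam * κ)) (𝓝[>] 0) (𝓝 0) :=
      tendsto_const_nhds.div_atTop hAtop
    have hUlim : Tendsto (fun θ : ℝ => lam / (lam + μ * θ ^ (1 - η))) (𝓝[>] 0) (𝓝 1) := by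
      have hcont : ContinuousAt (fun θ : ℝ => θ ^ (1 - η)) 0 :=
        Real.continuousAt_rpow_const 0 (1 - η) (Or.inr (by linarith))
      have h0 : Tendsto (fun θ : ℝ => θ ^ (1 - η)) (𝓝[>] 0) (𝓝 0) := by
        have := hcont.tendsto.mono_left (nhdsWithin_le_nhds (s := Set.Ioi (0:ℝ)))
        rwa [Real.zero_rpow (by linarith : (1:ℝ) - η ≠ 0)] at this
      have hden : Tendsto (fun θ : ℝ => lam + μ * θ ^ (1 - η)) (𝓝[>] 0) (𝓝 lam) := by
        have h1 : Tendsto (fun θ : ℝ => μ * θ ^ (1 - η)) (𝓝[>] 0) (𝓝 (μ * 0)) :=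
          h0.const_mul μ
        have h2 := h1.const_add lam
        simpa using h2
      have hq : Tendsto (fun θ : ℝ => lam / (lam + μ * θ ^ (1 - η))) (𝓝[>] (0:ℝ))
          (𝓝 (lam / lam)) := Tendsto.div tendsto_const_nhds hden hlam.ne'
      simpa [div_self hlam.ne'] using hq
    have hGlim : Tendsto G (𝓝[>] 0) (𝓝 0) := by
      have := hTlim.div hUlim one_ne_zero
      simp only [div_one] at this
      exact this
    have hDlim : Tendsto (fun θ => 1 + c * G θ) (𝓝[>] (0:ℝ)) (𝓝 1) := by
      have h1 : Tendsto (fun θ : ℝ => c * G θ) (𝓝[>] (0:ℝ)) (𝓝 (c * 0)) :=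
        hGlim.const_mul c
      have h2 := h1.const_add (1:ℝ)
      simpa using h2
    have hfin : Tendsto (fun θ : ℝ => -(1 - β / α) / (1 + c * G θ)) (𝓝[>] (0:ℝ))
        (𝓝 (-(1 - β / α) / 1)) := Tendsto.div tendsto_const_nhds hDlim one_ne_zero
    simp only [div_one] at hfin
    exact hfin.congr (fun θ => (helH' θ).symm)
  · -- limit at θτ
    have hmem : ∀ᶠ θ in 𝓝[<] θτ, θ ∈ Ioo (0:ℝ) θτ := by
      have h1 : ∀ᶠ θ in 𝓝[<] θτ, (0:ℝ) < θ :=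
        eventually_nhdsWithin_of_eventually_nhds (eventually_gt_nhds hθτ_pos)
      filter_upwards [h1, self_mem_nhdsWithin] with θ h1 h2
      exact ⟨h1, h2⟩
    have hθτη' : θτ ^ (-η) = lam * κ / μ := by
      rw [Real.rpow_neg hθτ_pos.le, hθτη]
      rw [inv_div]
    have hAcont : Tendsto (fun θ : ℝ => μ * θ ^ (-η) - lam * κ) (𝓝 θτ) (𝓝 0) := by
      have hcont : ContinuousAt (fun θ : ℝ => θ ^ (-η)) θτ :=
        Real.continuousAt_rpow_const θτ (-η) (Or.inl hθτ_pos.ne')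
      have := (hcont.tendsto.const_mul μ).sub_const (lam * κ)
      have hval : μ * θτ ^ (-η) - lam * κ = 0 := by
        rw [hθτη']; field_simp; ring
      rwa [hval] at this
    have hAzero : Tendsto (fun θ : ℝ => μ * θ ^ (-η) - lam * κ) (𝓝[<] θτ) (𝓝[>] 0) := by
      rw [tendsto_nhdsWithin_iff]
      exact ⟨hAcont.mono_left (nhdsWithin_le_nhds (s := Set.Iio θτ)),
        by filter_upwards [hmem] with θ hθ; exact hA θ hθ⟩
    have hTtop : Tendsto (fun θ : ℝ => lam * κ / (μ * θ ^ (-η) - lam * κ)) (𝓝[<] θτ) atTop := by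
      have h1 : Tendsto (fun θ : ℝ => (μ * θ ^ (-η) - lam * κ)⁻¹) (𝓝[<] θτ) atTop :=
        tendsto_inv_nhdsGT_zero.comp hAzero
      have := h1.const_mul_atTop hlk0
      exact this.congr (fun θ => (div_eq_mul_inv _ _).symm)
    have hBθτ : 0 < lam + μ * θτ ^ (1 - η) := hB θτ hθτ_pos.le
    have hUcont : Tendsto (fun θ : ℝ => lam / (lam + μ * θ ^ (1 - η))) (𝓝[<] θτ)
        (𝓝 (lam / (lam + μ * θτ ^ (1 - η)))) := by
      have hcont : ContinuousAt (fun θ : ℝ => θ ^ (1 - η)) θτ :=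
        Real.continuousAt_rpow_const θτ (1 - η) (Or.inl hθτ_pos.ne')
      have hden : Tendsto (fun θ : ℝ => lam + μ * θ ^ (1 - η)) (𝓝 θτ)
          (𝓝 (lam + μ * θτ ^ (1 - η))) := (hcont.tendsto.const_mul μ).const_add lam
      have hq : Tendsto (fun θ : ℝ => lam / (lam + μ * θ ^ (1 - η))) (𝓝 θτ)
          (𝓝 (lam / (lam + μ * θτ ^ (1 - η)))) := Tendsto.div tendsto_const_nhds hden hBθτ.ne'
      exact hq.mono_left (nhdsWithin_le_nhds (s := Set.Iio θτ))
    have hUinv : Tendsto (fun θ : ℝ => (lam / (lam + μ * θ ^ (1 - η)))⁻¹) (𝓝[<] θτ)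
        (𝓝 ((lam / (lam + μ * θτ ^ (1 - η)))⁻¹)) :=
      hUcont.inv₀ (div_pos hlam hBθτ).ne'
    have hGtop : Tendsto G (𝓝[<] θτ) atTop := by
      have hpos : 0 < (lam / (lam + μ * θτ ^ (1 - η)))⁻¹ :=
        inv_pos.mpr (div_pos hlam hBθτ)
      have := hTtop.atTop_mul_pos hpos hUinv
      exact this.congr (fun θ => (div_eq_mul_inv _ _).symm)
    have hDtop : Tendsto (fun θ => 1 + c * G θ) (𝓝[<] θτ) atTop := by
      have := hGtop.const_mul_atTop hc
      exact tendsto_atTop_add_const_left _ 1 this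
    have hfin : Tendsto (fun θ : ℝ => -(1 - β / α) / (1 + c * G θ)) (𝓝[<] θτ) (𝓝 0) :=
      Tendsto.div_atTop tendsto_const_nhds hDtop
    exact hfin.congr (fun θ => (helH' θ).symm)
end

section
/- The share of labor that is productive, (1-u(θ))/(1+τ(θ)), is maximized on (0,θ_τ) exactly at the tightness θ* satisfying η·τ(θ*) = (1-η)·u(θ*); such θ* exists and is unique. -/
/-- derivative of the simplified share function -/
lemma aux_hasDeriv (μ η lam κ : ℝ) {θ : ℝ} (hθ : 0 < θ)
    (hD : lam + μ * θ ^ (1 - η) ≠ 0) :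
    HasDerivAt (fun t : ℝ => (μ * t ^ (1 - η) - lam * κ * t) / (lam + μ * t ^ (1 - η)))
      (lam * (μ * (1 - η) * θ ^ (-η) - lam * κ - η * μ * κ * θ ^ (1 - η))
        / (lam + μ * θ ^ (1 - η)) ^ 2) θ := by
  have hb : θ ^ (1 - η) = θ ^ (-η) * θ := by
    rw [show (1 - η) = -η + 1 by ring, Real.rpow_add hθ, Real.rpow_one]
  have hbase : HasDerivAt (fun t : ℝ => t ^ (1 - η)) ((1 - η) * θ ^ (-η)) θ := by
    have h := Real.hasDerivAt_rpow_const (x := θ) (p := 1 - η) (Or.inl hθ.ne')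
    convert h using 2
    congr 1
    ring
  have hN : HasDerivAt (fun t : ℝ => μ * t ^ (1 - η) - lam * κ * t)
      (μ * ((1 - η) * θ ^ (-η)) - lam * κ) θ := by
    have h1 := hbase.const_mul μ
    have h2 := (hasDerivAt_id θ).const_mul (lam * κ)
    simpa using h1.fun_sub h2
  have hDd : HasDerivAt (fun t : ℝ => lam + μ * t ^ (1 - η))
      (μ * ((1 - η) * θ ^ (-η))) θ := (hbase.const_mul μ).const_add lam
  have h := hN.div hDd hD
  refine h.congr_deriv ?_
  rw [hb]
  ring

/-- The share of labor that is productive, `(1-u(θ))/(1+τ(θ))`, with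
`u(θ) = λ/(λ+μθ^(1-η))` and `τ(θ) = λκ/(μθ^(-η)-λκ)`, is maximized on
`(0, θ_τ)` exactly at the tightness `θ*` satisfying `η·τ(θ*) = (1-η)·u(θ*)`;
such `θ*` exists and is unique. -/
theorem stmt_16 (μ η lam κ : ℝ) (hμ : 0 < μ) (hη0 : 0 < η) (hη1 : η < 1)
    (hlam : 0 < lam) (hκ : 0 < κ) (hlk : lam * κ < μ)
    (θτ : ℝ) (hθτ : θτ = (μ / (lam * κ)) ^ (1 / η))
    (u τ : ℝ → ℝ)
    (hu : ∀ θ, u θ = lam / (lam + μ * θ ^ (1 - η)))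
    (hτ : ∀ θ, τ θ = lam * κ / (μ * θ ^ (-η) - lam * κ)) :
    ∃! θstar : ℝ, θstar ∈ Set.Ioo 0 θτ ∧ η * τ θstar = (1 - η) * u θstar ∧
      (∀ θ ∈ Set.Ioo 0 θτ, (1 - u θ) / (1 + τ θ) ≤ (1 - u θstar) / (1 + τ θstar)) ∧
      (∀ θ ∈ Set.Ioo 0 θτ,
        (1 - u θ) / (1 + τ θ) = (1 - u θstar) / (1 + τ θstar) → θ = θstar) := by
  have hlk0 : 0 < lam * κ := mul_pos hlam hκ
  set F : ℝ → ℝ := fun t => (μ * t ^ (1 - η) - lam * κ * t) / (lam + μ * t ^ (1 - η)) with hFdef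
  set g : ℝ → ℝ := fun t => μ * (1 - η) * t ^ (-η) - lam * κ - η * μ * κ * t ^ (1 - η) with hgdef
  have hratio : (1 : ℝ) < μ / (lam * κ) := (one_lt_div hlk0).2 hlk
  have hθτpos : 0 < θτ := by
    rw [hθτ]; exact Real.rpow_pos_of_pos (by linarith) _
  have hθτpow : μ * θτ ^ (-η) = lam * κ := by
    rw [hθτ, ← Real.rpow_mul (by linarith : (0:ℝ) ≤ μ / (lam * κ)),
      show (1/η) * (-η) = -1 by field_simp, Real.rpow_neg_one]
    field_simp
  have hapos : ∀ {θ : ℝ}, 0 < θ → 0 < θ ^ (-η) := fun h => Real.rpow_pos_of_pos h _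
  have hbpos : ∀ {θ : ℝ}, 0 < θ → 0 < θ ^ (1 - η) := fun h => Real.rpow_pos_of_pos h _
  have hDpos : ∀ {θ : ℝ}, 0 < θ → 0 < lam + μ * θ ^ (1 - η) := fun h => by
    have := hbpos h; nlinarith
  have hb : ∀ {θ : ℝ}, 0 < θ → θ ^ (1 - η) = θ ^ (-η) * θ := fun h => by
    rw [show (1 - η) = -η + 1 by ring, Real.rpow_add h, Real.rpow_one]
  have hTpos : ∀ θ ∈ Set.Ioo (0:ℝ) θτ, 0 < μ * θ ^ (-η) - lam * κ := by
    intro θ hθ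
    have h1 : θτ ^ (-η) < θ ^ (-η) :=
      Real.rpow_lt_rpow_of_neg hθ.1 hθ.2 (by linarith)
    nlinarith
  -- the share equals F
  have hSF : ∀ θ ∈ Set.Ioo (0:ℝ) θτ, (1 - u θ) / (1 + τ θ) = F θ := by
    intro θ hθ
    have hD := hDpos hθ.1
    have hT := hTpos θ hθ
    have ha := hapos hθ.1
    have hbb := hb hθ.1
    rw [hu, hτ]
    simp only [hFdef]
    rw [hbb]
    rw [hbb] at hD
    have hD' : lam + μ * θ ^ (-η) * θ ≠ 0 := by rw [mul_assoc]; exact hD.ne'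
    have hT' := hT.ne'
    field_simp
    ring
  -- the FOC is equivalent to g = 0
  have hcond : ∀ θ ∈ Set.Ioo (0:ℝ) θτ, (η * τ θ = (1 - η) * u θ ↔ g θ = 0) := by
    intro θ hθ
    have hD := hDpos hθ.1
    have hT := hTpos θ hθ
    have hbb := hb hθ.1
    have hdiff : η * τ θ - (1 - η) * u θ =
        -lam * g θ / ((μ * θ ^ (-η) - lam * κ) * (lam + μ * θ ^ (1 - η))) := by
      rw [hτ, hu]
      simp only [hgdef]
      rw [hbb]
      rw [hbb] at hD
      have hD' : lam + μ * θ ^ (-η) * θ ≠ 0 := by rw [mul_assoc]; exact hD.ne'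
      have hT' := hT.ne'
      field_simp
      ring
    constructor
    · intro h
      have h0 : -lam * g θ / ((μ * θ ^ (-η) - lam * κ) * (lam + μ * θ ^ (1 - η))) = 0 := by
        rw [← hdiff, h, sub_self]
      have hden : (μ * θ ^ (-η) - lam * κ) * (lam + μ * θ ^ (1 - η)) ≠ 0 :=
        (mul_pos hT hD).ne'
      have := (div_eq_zero_iff.mp h0).resolve_right hden
      have hml : -lam ≠ 0 := by linarith
      exact (mul_eq_zero.mp this).resolve_left hml
    · intro h
      have : η * τ θ - (1 - η) * u θ = 0 := by rw [hdiff, h]; simp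
      linarith
  -- g is strictly decreasing on (0,∞)
  have hganti : StrictAntiOn g (Set.Ioi (0:ℝ)) := by
    intro x hx y hy hxy
    simp only [Set.mem_Ioi] at hx hy
    have h1 : y ^ (-η) < x ^ (-η) := Real.rpow_lt_rpow_of_neg hx hxy (by linarith)
    have h2 : x ^ (1 - η) < y ^ (1 - η) := Real.rpow_lt_rpow hx.le hxy (by linarith)
    simp only [hgdef]
    have p1 : 0 < μ * (1 - η) := by nlinarith
    have p2 : 0 < η * μ * κ := by positivity
    nlinarith
  -- g is negative at θτ
  have hgτ : g θτ < 0 := by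
    simp only [hgdef]
    have h1 : 0 < θτ ^ (1 - η) := hbpos hθτpos
    have h2 : μ * (1 - η) * θτ ^ (-η) = (1 - η) * (lam * κ) := by
      linear_combination (1 - η) * hθτpow
    nlinarith [mul_pos hη0 hlk0, mul_pos (mul_pos (mul_pos hη0 hμ) hκ) h1]
  -- find a small point where g is positive
  obtain ⟨a, ha0, haτ, hga⟩ : ∃ a : ℝ, 0 < a ∧ a < θτ ∧ 0 < g a := by
    set C : ℝ := lam * κ + η * μ * κ + 1 with hC
    have hCpos : 0 < C := by positivity
    have hA0 : 0 < μ * (1 - η) / C := by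
      have : 0 < μ * (1 - η) := by nlinarith
      positivity
    set A : ℝ := (μ * (1 - η) / C) ^ (1 / η) with hA
    have hApos : 0 < A := Real.rpow_pos_of_pos hA0 _
    refine ⟨min θτ (min 1 A) / 2, by positivity, ?_, ?_⟩
    · calc min θτ (min 1 A) / 2 ≤ θτ / 2 := by
            have := min_le_left θτ (min 1 A); linarith
        _ < θτ := by linarith
    · set a := min θτ (min 1 A) / 2 with hadef
      have ha0 : 0 < a := by positivity
      have ha1 : a < 1 := by
        have h1 := min_le_right θτ (min 1 A)
        have h2 := min_le_left (1:ℝ) A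
        simp only [hadef]; linarith
      have haA : a ≤ A := by
        have h1 := min_le_right θτ (min 1 A)
        have h2 := min_le_right (1:ℝ) A
        simp only [hadef]; linarith
      have hb1 : a ^ (1 - η) < 1 := Real.rpow_lt_one ha0.le ha1 (by linarith)
      have hb2 : A ^ (-η) ≤ a ^ (-η) :=
        Real.rpow_le_rpow_of_nonpos ha0 haA (by linarith)
      have hApow : A ^ (-η) = C / (μ * (1 - η)) := by
        rw [hA, ← Real.rpow_mul hA0.le, show (1/η) * (-η) = -1 by field_simp,
          Real.rpow_neg_one]
        rw [inv_div]
      have hkey : C ≤ μ * (1 - η) * a ^ (-η) := by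
        have hμη : 0 < μ * (1 - η) := by nlinarith
        have := mul_le_mul_of_nonneg_left hb2 hμη.le
        rw [hApow] at this
        rw [mul_div_cancel₀ _ hμη.ne'] at this
        linarith
      simp only [hgdef]
      have p2 : 0 < η * μ * κ := by positivity
      nlinarith
  -- IVT to get the root θstar
  have hgc : ContinuousOn g (Set.Icc a θτ) := by
    intro x hx
    have hx0 : x ≠ 0 := (lt_of_lt_of_le ha0 hx.1).ne'
    have h1 : ContinuousAt (fun t : ℝ => t ^ (-η)) x :=
      Real.continuousAt_rpow_const x _ (Or.inl hx0)
    have h2 : ContinuousAt (fun t : ℝ => t ^ (1 - η)) x :=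
      Real.continuousAt_rpow_const x _ (Or.inl hx0)
    have hc : ContinuousAt g x :=
      ((continuousAt_const.mul h1).sub continuousAt_const).sub (continuousAt_const.mul h2)
    exact hc.continuousWithinAt
  obtain ⟨θs, hθsmem, hroot⟩ : ∃ θs ∈ Set.Icc a θτ, g θs = 0 := by
    have h0 : (0:ℝ) ∈ Set.Icc (g θτ) (g a) := ⟨hgτ.le, hga.le⟩
    have := intermediate_value_Icc' haτ.le hgc h0
    obtain ⟨c, hc, hgc0⟩ := this
    exact ⟨c, hc, hgc0⟩
  have hθs0 : 0 < θs := lt_of_lt_of_le ha0 hθsmem.1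
  have hθsτ : θs < θτ := lt_of_le_of_ne hθsmem.2 (by
    intro h; rw [h] at hroot; linarith)
  have hθsIoo : θs ∈ Set.Ioo (0:ℝ) θτ := ⟨hθs0, hθsτ⟩
  -- sign of g on either side of θs
  have hgpos : ∀ x ∈ Set.Ioo (0:ℝ) θs, 0 < g x := by
    intro x hx
    have := hganti (Set.mem_Ioi.2 hx.1) (Set.mem_Ioi.2 hθs0) hx.2
    rw [hroot] at this; exact this
  have hgneg : ∀ x ∈ Set.Ioo θs θτ, g x < 0 := by
    intro x hx
    have := hganti (Set.mem_Ioi.2 hθs0) (Set.mem_Ioi.2 (hθs0.trans hx.1)) hx.1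
    rw [hroot] at this; exact this
  -- F has derivative lam * g / D^2 at every positive point
  have hFd : ∀ {x : ℝ}, 0 < x → HasDerivAt F
      (lam * g x / (lam + μ * x ^ (1 - η)) ^ 2) x := by
    intro x hx
    exact aux_hasDeriv μ η lam κ hx (hDpos hx).ne'
  have hFcont : ∀ s : Set ℝ, (∀ x ∈ s, 0 < x) → ContinuousOn F s := by
    intro s hs x hx
    exact ((hFd (hs x hx)).differentiableAt.continuousAt).continuousWithinAt
  -- strict monotonicity on (0, θs]
  have hmono : StrictMonoOn F (Set.Ioc 0 θs) := by
    apply strictMonoOn_of_deriv_pos (convex_Ioc _ _)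
    · exact hFcont _ (fun x hx => hx.1)
    · intro x hx
      rw [interior_Ioc] at hx
      rw [(hFd hx.1).deriv]
      have hgx := hgpos x hx
      have hD := hDpos hx.1
      exact div_pos (mul_pos hlam hgx) (pow_pos hD 2)
  -- strict antitonicity on [θs, θτ)
  have hanti : StrictAntiOn F (Set.Ico θs θτ) := by
    apply strictAntiOn_of_deriv_neg (convex_Ico _ _)
    · exact hFcont _ (fun x hx => lt_of_lt_of_le hθs0 hx.1)
    · intro x hx
      rw [interior_Ico] at hx
      rw [(hFd (hθs0.trans hx.1)).deriv]
      have hgx := hgneg x hx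
      have hD := hDpos (hθs0.trans hx.1)
      exact div_neg_of_neg_of_pos (mul_neg_of_pos_of_neg hlam hgx) (pow_pos hD 2)
  -- strict maximality
  have hmax : ∀ θ ∈ Set.Ioo (0:ℝ) θτ, θ ≠ θs → F θ < F θs := by
    intro θ hθ hne
    rcases lt_or_gt_of_ne hne with h | h
    · exact hmono ⟨hθ.1, h.le⟩ ⟨hθs0, le_refl _⟩ h
    · exact hanti ⟨le_refl _, hθsτ⟩ ⟨h.le, hθ.2⟩ h
  refine ⟨θs, ⟨hθsIoo, (hcond θs hθsIoo).2 hroot, ?_, ?_⟩, ?_⟩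
  · intro θ hθ
    rw [hSF θ hθ, hSF θs hθsIoo]
    by_cases h : θ = θs
    · rw [h]
    · exact (hmax θ hθ h).le
  · intro θ hθ heq
    by_contra hne
    rw [hSF θ hθ, hSF θs hθsIoo] at heq
    exact absurd heq (hmax θ hθ hne).ne
  · rintro θ' ⟨hmem', hcond', -, -⟩
    have h0 : g θ' = 0 := (hcond θ' hmem').1 hcond'
    exact hganti.injOn (Set.mem_Ioi.2 hmem'.1) (Set.mem_Ioi.2 hθs0)
      (by rw [h0, hroot])
end

section
/- The elasticity of local welfare with respect to the migration factor at m = 1 equals (α-β)·[1 - 1/(α + (1-α)·(η/(1-η))·(τ(θ)/u(θ)))]; this quantity is strictly negative when (η/(1-η))·τ(θ)/u(θ) < 1, zero when (η/(1-η))·τ(θ)/u(θ) = 1, and strictly positive when (η/(1-η))·τ(θ)/u(θ) > 1, given 0 ≤ β < α < 1. -/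
/-- The elasticity of local welfare with respect to the migration factor at
`m = 1` equals `(α-β)·(1 - 1/(α + (1-α)·(η/(1-η))·(τ/u)))`; it is strictly
negative when `(η/(1-η))·τ/u < 1`, zero when it equals `1`, and strictly
positive when it exceeds `1`, given `0 ≤ β < α < 1`, `η ∈ (0,1)`, `τ > 0`,
`u ∈ (0,1)`. -/
theorem stmt_17 (α β η τ u : ℝ) (hα0 : 0 < α) (hα1 : α < 1)
    (hβ0 : 0 ≤ β) (hβα : β < α) (hη0 : 0 < η) (hη1 : η < 1)
    (hτ : 0 < τ) (hu0 : 0 < u) (hu1 : u < 1) :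
    (η / (1 - η) * (τ / u) < 1 →
      (α - β) * (1 - 1 / (α + (1 - α) * (η / (1 - η)) * (τ / u))) < 0) ∧
    (η / (1 - η) * (τ / u) = 1 →
      (α - β) * (1 - 1 / (α + (1 - α) * (η / (1 - η)) * (τ / u))) = 0) ∧
    (1 < η / (1 - η) * (τ / u) →
      0 < (α - β) * (1 - 1 / (α + (1 - α) * (η / (1 - η)) * (τ / u)))) := by
  set x := η / (1 - η) * (τ / u) with hx
  have hx0 : 0 < x := by
    apply mul_pos (div_pos hη0 (by linarith)) (div_pos hτ hu0)
  have hD : α + (1 - α) * (η / (1 - η)) * (τ / u) = α + (1 - α) * x := by ring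
  rw [hD]
  have hαβ : 0 < α - β := by linarith
  have hDpos : 0 < α + (1 - α) * x := by nlinarith
  refine ⟨fun h => ?_, fun h => ?_, fun h => ?_⟩
  · have hD1 : α + (1 - α) * x < 1 := by nlinarith
    have : 1 < 1 / (α + (1 - α) * x) := (lt_div_iff₀ hDpos).mpr (by linarith)
    nlinarith
  · rw [h]; norm_num
  · have hD1 : 1 < α + (1 - α) * x := by nlinarith
    have : 1 / (α + (1 - α) * x) < 1 := by
      rw [div_lt_one hDpos]; exact hD1
    nlinarith
end

section
/- If the optimal migration factor m̂ > 1 satisfies αm̂/(αm̂ + 1-α) - β = (α-β)/(α + (1-α)·(η/(1-η))·(τ(θ̂)/u(θ̂))), where θ̂ is the resulting tightness, then (η/(1-η))·τ(θ̂)/u(θ̂) < 1; that is, at the optimum level of in-migration the labor market is strictly slacker than efficient. -/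
/-- If the optimal migration factor `m̂ > 1` satisfies
`α m̂/(α m̂ + 1-α) - β = (α-β)/(α + (1-α)·(η/(1-η))·(τ/u))`, where `τ = τ(θ̂)`
and `u = u(θ̂)` at the resulting tightness, then `(η/(1-η))·τ/u < 1`: at the
optimum level of in-migration the labor market is strictly slacker than
efficient. -/
theorem stmt_18 (α β η τ u m : ℝ) (hα0 : 0 < α) (hα1 : α < 1)
    (hβ0 : 0 ≤ β) (hβα : β < α) (hη0 : 0 < η) (hη1 : η < 1)
    (hτ : 0 < τ) (hu0 : 0 < u) (hu1 : u < 1) (hm : 1 < m)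
    (hopt : α * m / (α * m + 1 - α) - β =
      (α - β) / (α + (1 - α) * (η / (1 - η)) * (τ / u))) :
    η / (1 - η) * (τ / u) < 1 := by
  set x : ℝ := η / (1 - η) * (τ / u) with hx
  have hxpos : 0 < x := by
    apply mul_pos (div_pos hη0 (by linarith)) (div_pos hτ hu0)
  have hD : (0:ℝ) < α * m + 1 - α := by nlinarith
  have hlhs : α < α * m / (α * m + 1 - α) := by
    rw [lt_div_iff₀ hD]
    nlinarith [mul_pos (mul_pos hα0 (sub_pos.mpr hα1)) (sub_pos.mpr hm)]
  have hdenom : 0 < α + (1 - α) * x := by nlinarith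
  have hden1 : α + (1 - α) * x < 1 := by
    by_contra h
    push_neg at h
    have : (α - β) / (α + (1 - α) * x) ≤ α - β := by
      rw [div_le_iff₀ hdenom]
      nlinarith
    have h2 : α * m / (α * m + 1 - α) - β = (α - β) / (α + (1 - α) * x) := by
      rw [hopt, hx]; ring_nf
    linarith
  nlinarith
end
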